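/- arXiv:1404.5448 — 3 statements merged into one kernel-verified Lean document; each statement's English description precedes it below -/
import Mathlib

section
/- In the discrete model, the optimal q-sink evacuation time of a path is at least the optimal q-sink evacuation time of any of its subpaths: for every q ≥ 1 and indices 0 ≤ l ≤ l' ≤ r' ≤ r ≤ n, the optimal q-sink evacuation time of [x_{l'}, x_{r'}] is less than or equal to the optimal q-sink evacuation time of [x_l, x_r]. -/
/-- Maximum of `f` over a finite set of indices, with the empty maximum being `0`. -/
noncomputable def maxOver (S : Finset ℕ) (f : ℕ → ℝ) : ℝ := S.fold max 0 f

/-- Discrete-model 1-sink evacuation time `Θ¹([x_l,x_r], x_t)` with capacity `c`. -/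
noncomputable def theta1D (x : ℕ → ℝ) (τ : ℝ) (c : ℕ) (w : ℕ → ℕ) (l t r : ℕ) : ℝ :=
  max
    (maxOver (Finset.Ico l t) (fun i =>
      (x t - x i) * τ + (⌈((∑ j ∈ Finset.Icc l i, w j : ℕ) : ℝ) / (c : ℝ)⌉ : ℝ) - 1))
    (maxOver (Finset.Ioc t r) (fun i =>
      (x i - x t) * τ + (⌈((∑ j ∈ Finset.Icc i r, w j : ℕ) : ℝ) / (c : ℝ)⌉ : ℝ) - 1))

/-- A partition of `{l,…,r}` into `m` consecutive nonempty blocks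
`{lf p, …, rf p}` (`p ∈ {1,…,m}`) with a sink `tf p` in each block. -/
def IsPartitionSinks (l r m : ℕ) (lf rf tf : ℕ → ℕ) : Prop :=
  lf 1 = l ∧ rf m = r ∧ (∀ p, 1 ≤ p → p < m → lf (p + 1) = rf p + 1) ∧
  (∀ p, 1 ≤ p → p ≤ m → lf p ≤ rf p) ∧
  (∀ p, 1 ≤ p → p ≤ m → lf p ≤ tf p ∧ tf p ≤ rf p)

/-- Optimal `q`-sink evacuation time of the subpath `[x_l, x_r]`: minimum over
partitions into at most `q` consecutive nonempty blocks with sinks of the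
maximum block 1-sink evacuation time. -/
noncomputable def optEvac (x : ℕ → ℝ) (τ : ℝ) (c : ℕ) (w : ℕ → ℕ) (l r q : ℕ) : ℝ :=
  sInf {v : ℝ | ∃ m lf rf tf, 1 ≤ m ∧ m ≤ q ∧ IsPartitionSinks l r m lf rf tf ∧
    maxOver (Finset.Icc 1 m) (fun p => theta1D x τ c w (lf p) (tf p) (rf p)) = v}

/-- `w_{ji}`: optimal 1-sink evacuation time of `[x_j, x_i]`. -/
noncomputable def w1 (x : ℕ → ℝ) (τ : ℝ) (c : ℕ) (w : ℕ → ℕ) (j i : ℕ) : ℝ :=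
  sInf {v : ℝ | ∃ t, j ≤ t ∧ t ≤ i ∧ theta1D x τ c w j t i = v}

/-- `T(q, i)`: optimal `q`-sink evacuation time of `[x_0, x_i]`. -/
noncomputable def Tfun (x : ℕ → ℝ) (τ : ℝ) (c : ℕ) (w : ℕ → ℕ) (q i : ℕ) : ℝ :=
  optEvac x τ c w 0 i q

/-- `T(q, j−1)` with the convention `T(q, −1) = 0` (for `j = 0`). -/
noncomputable def Tprev (x : ℕ → ℝ) (τ : ℝ) (c : ℕ) (w : ℕ → ℕ) (q j : ℕ) : ℝ :=
  if j = 0 then 0 else Tfun x τ c w q (j - 1)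

lemma maxOver_nonneg (S : Finset ℕ) (f : ℕ → ℝ) : 0 ≤ maxOver S f :=
  (Finset.le_fold_max _).2 (Or.inl le_rfl)

lemma le_maxOver {S : Finset ℕ} {f : ℕ → ℝ} {i : ℕ} (h : i ∈ S) : f i ≤ maxOver S f :=
  (Finset.le_fold_max _).2 (Or.inr ⟨i, h, le_rfl⟩)

lemma maxOver_le {S : Finset ℕ} {f : ℕ → ℝ} {B : ℝ} (hB : 0 ≤ B)
    (h : ∀ i ∈ S, f i ≤ B) : maxOver S f ≤ B :=
  (Finset.fold_max_le _).2 ⟨hB, h⟩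

lemma theta1D_nonneg (x : ℕ → ℝ) (τ : ℝ) (c : ℕ) (w : ℕ → ℕ) (l t r : ℕ) :
    0 ≤ theta1D x τ c w l t r :=
  le_trans (maxOver_nonneg _ _) (le_max_left _ _)

lemma xmono {n : ℕ} {x : ℕ → ℝ} (hx : ∀ i, i < n → x i < x (i + 1))
    {i j : ℕ} (hij : i ≤ j) (hj : j ≤ n) : x i ≤ x j := by
  induction j with
  | zero => simp_all
  | succ k ih =>
    rcases Nat.lt_or_ge i (k+1) with h | h
    · exact le_trans (ih (by omega) (by omega)) (le_of_lt (hx k (by omega)))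
    · have : i = k + 1 := by omega
      simp [this]

lemma ceil_sum_mono {c : ℕ} (w : ℕ → ℕ) {S T : Finset ℕ} (hST : S ⊆ T) :
    (⌈((∑ j ∈ S, w j : ℕ) : ℝ) / (c : ℝ)⌉ : ℝ) ≤ (⌈((∑ j ∈ T, w j : ℕ) : ℝ) / (c : ℝ)⌉ : ℝ) := by
  have hs : (∑ j ∈ S, w j : ℕ) ≤ (∑ j ∈ T, w j : ℕ) :=
    Finset.sum_le_sum_of_subset hST
  rcases Nat.eq_zero_or_pos c with hc | hc
  · simp [hc]
  · have hc' : (0:ℝ) < (c:ℝ) := by exact_mod_cast hc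
    have hd : ((∑ j ∈ S, w j : ℕ) : ℝ) / (c:ℝ) ≤ ((∑ j ∈ T, w j : ℕ) : ℝ) / (c:ℝ) := by
      gcongr
    exact_mod_cast Int.ceil_le_ceil hd

/-- Key monotonicity: shrinking the block and clamping the sink does not
increase the 1-sink evacuation time. -/
lemma theta1D_mono {n : ℕ} {x : ℕ → ℝ} {τ : ℝ} {c : ℕ} {w : ℕ → ℕ}
    (hx : ∀ i, i < n → x i < x (i + 1)) (hτ : 0 ≤ τ)
    {l l' r' r t : ℕ} (hll' : l ≤ l') (hl'r' : l' ≤ r') (hr'r : r' ≤ r) (hrn : r ≤ n)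
    (hlt : l ≤ t) (htr : t ≤ r) :
    theta1D x τ c w l' (max l' (min t r')) r' ≤ theta1D x τ c w l t r := by
  set t' := max l' (min t r') with ht'
  have ht'1 : l' ≤ t' := le_max_left _ _
  have ht'2 : t' ≤ r' := by omega
  apply max_le
  · apply maxOver_le (theta1D_nonneg _ _ _ _ _ _ _)
    intro i hi
    simp only [Finset.mem_Ico] at hi
    have hit : t' = min t r' := by omega
    have hit' : i < t := by omega
    have hxt : x t' ≤ x t := xmono hx (by omega) (by omega)
    have hterm : (x t' - x i) * τ + (⌈((∑ j ∈ Finset.Icc l' i, w j : ℕ) : ℝ) / (c : ℝ)⌉ : ℝ) - 1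
        ≤ (x t - x i) * τ + (⌈((∑ j ∈ Finset.Icc l i, w j : ℕ) : ℝ) / (c : ℝ)⌉ : ℝ) - 1 := by
      have h1 : (x t' - x i) * τ ≤ (x t - x i) * τ :=
        mul_le_mul_of_nonneg_right (by linarith) hτ
      have h2 := ceil_sum_mono (c := c) w (Finset.Icc_subset_Icc_left hll' (b := i))
      linarith
    refine le_trans hterm (le_trans (le_maxOver (i := i) (f := fun i =>
      (x t - x i) * τ + (⌈((∑ j ∈ Finset.Icc l i, w j : ℕ) : ℝ) / (c : ℝ)⌉ : ℝ) - 1) ?_) (le_max_left _ _))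
    exact Finset.mem_Ico.mpr ⟨by omega, by omega⟩
  · apply maxOver_le (theta1D_nonneg _ _ _ _ _ _ _)
    intro i hi
    simp only [Finset.mem_Ioc] at hi
    have hit : t' = max l' t ∨ t' ≥ t := by omega
    have hti : t < i := by omega
    have hxt : x t ≤ x t' := by
      rcases le_or_gt t t' with h | h
      · exact xmono hx h (by omega)
      · omega
    have hterm : (x i - x t') * τ + (⌈((∑ j ∈ Finset.Icc i r', w j : ℕ) : ℝ) / (c : ℝ)⌉ : ℝ) - 1
        ≤ (x i - x t) * τ + (⌈((∑ j ∈ Finset.Icc i r, w j : ℕ) : ℝ) / (c : ℝ)⌉ : ℝ) - 1 := by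
      have h1 : (x i - x t') * τ ≤ (x i - x t) * τ :=
        mul_le_mul_of_nonneg_right (by linarith) hτ
      have h2 := ceil_sum_mono (c := c) w (Finset.Icc_subset_Icc_right hr'r (a := i))
      linarith
    refine le_trans hterm (le_trans (le_maxOver (i := i) (f := fun i =>
      (x i - x t) * τ + (⌈((∑ j ∈ Finset.Icc i r, w j : ℕ) : ℝ) / (c : ℝ)⌉ : ℝ) - 1) ?_) (le_max_right _ _))
    exact Finset.mem_Ioc.mpr ⟨by omega, by omega⟩

/-- the optimal `q`-sink evacuation time of a path is at least
that of any of its subpaths. -/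
theorem stmt_9 (n : ℕ) (x : ℕ → ℝ) (τ : ℝ) (c : ℕ) (w : ℕ → ℕ)
    (hx : ∀ i, i < n → x i < x (i + 1)) (hτ : 0 < τ) (hc : 1 ≤ c)
    (hw : ∀ i, i ≤ n → 0 < w i)
    (q l l' r' r : ℕ) (hq : 1 ≤ q)
    (h1 : l ≤ l') (h2 : l' ≤ r') (h3 : r' ≤ r) (h4 : r ≤ n) :
    optEvac x τ c w l' r' q ≤ optEvac x τ c w l r q := by
  unfold optEvac
  set S := {v : ℝ | ∃ m lf rf tf, 1 ≤ m ∧ m ≤ q ∧ IsPartitionSinks l r m lf rf tf ∧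
    maxOver (Finset.Icc 1 m) (fun p => theta1D x τ c w (lf p) (tf p) (rf p)) = v} with hS
  set S' := {v : ℝ | ∃ m lf rf tf, 1 ≤ m ∧ m ≤ q ∧ IsPartitionSinks l' r' m lf rf tf ∧
    maxOver (Finset.Icc 1 m) (fun p => theta1D x τ c w (lf p) (tf p) (rf p)) = v} with hS'
  have hbdd : BddBelow S' := by
    refine ⟨0, fun v hv => ?_⟩
    obtain ⟨m, lf, rf, tf, _, _, _, hv⟩ := hv
    rw [← hv]; exact maxOver_nonneg _ _
  have hSne : S.Nonempty := by
    refine ⟨_, 1, (fun _ => l), (fun _ => r), (fun _ => l), le_rfl, hq, ?_, rfl⟩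
    exact ⟨rfl, rfl, fun p hp1 hp2 => absurd hp2 (by omega),
      fun p _ _ => le_trans h1 (le_trans h2 h3),
      fun p _ _ => ⟨le_rfl, le_trans h1 (le_trans h2 h3)⟩⟩
  apply le_csInf hSne
  rintro v ⟨m, lf, rf, tf, hm1, hmq, ⟨hP1, hP2, hP3, hP4, hP5⟩, hv⟩
  -- monotonicity of lf, rf
  have lfmono : ∀ p p', 1 ≤ p → p ≤ p' → p' ≤ m → lf p ≤ lf p' ∧ rf p ≤ rf p' := by
    intro p p' hp hpp' hp'm
    induction p' with
    | zero => omega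
    | succ k ih =>
      rcases Nat.lt_or_ge p (k+1) with h | h
      · have hk := ih (by omega) (by omega)
        have h3 := hP3 k (by omega) (by omega)
        have h4 := hP4 (k+1) (by omega) hp'm
        have h4' := hP4 k (by omega) (by omega)
        omega
      · have : p = k + 1 := by omega
        simp [this]
  -- the block containing l' (resp. r')
  have hexa : ∀ k, l ≤ k → k ≤ r →
      ∃ a, 1 ≤ a ∧ a ≤ m ∧ lf a ≤ k ∧ k ≤ rf a ∧
        (∀ p, 1 ≤ p → p ≤ m → lf p ≤ k → p ≤ a) := by
    intro k hk1 hk2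
    set F := (Finset.Icc 1 m).filter (fun p => lf p ≤ k) with hF
    have hFne : F.Nonempty := ⟨1, Finset.mem_filter.mpr
      ⟨Finset.mem_Icc.mpr ⟨le_rfl, hm1⟩, by rw [hP1]; exact hk1⟩⟩
    set a := F.max' hFne with ha
    have haF : a ∈ F := F.max'_mem hFne
    simp only [hF, Finset.mem_filter, Finset.mem_Icc] at haF
    refine ⟨a, haF.1.1, haF.1.2, haF.2, ?_, ?_⟩
    · rcases Nat.lt_or_ge a m with h | h
      · have h3 := hP3 a haF.1.1 h
        by_contra hcon
        push_neg at hcon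
        have hmem : a + 1 ∈ F := Finset.mem_filter.mpr
          ⟨Finset.mem_Icc.mpr ⟨by omega, by omega⟩, by omega⟩
        have := F.le_max' _ hmem
        omega
      · have hra : rf a = r := by
          have ham' : a = m := le_antisymm haF.1.2 h
          rw [ham', hP2]
        omega
    · intro p hp1 hp2 hpk
      exact F.le_max' p (by simp [hF, Finset.mem_filter, Finset.mem_Icc, hp1, hp2, hpk])
  obtain ⟨a, ha1, ham, hal, har, hamax⟩ := hexa l' h1 (le_trans h2 h3)
  obtain ⟨b, hb1, hbm, hbl, hbr, hbmax⟩ := hexa r' (le_trans h1 h2) h3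
  have hab : a ≤ b := hbmax a ha1 ham (le_trans hal h2)
  -- new partition
  set m' := b + 1 - a with hm'
  set lf' := fun p => max l' (lf (p + a - 1)) with hlf'
  set rf' := fun p => min r' (rf (p + a - 1)) with hrf'
  set tf' := fun p => max (lf' p) (min (tf (p + a - 1)) (rf' p)) with htf'
  have hm'1 : 1 ≤ m' := by omega
  have hm'q : m' ≤ q := by omega
  -- facts for p in range
  have key : ∀ p, 1 ≤ p → p ≤ m' →
      lf (p + a - 1) ≤ lf b ∧ rf a ≤ rf (p + a - 1) ∧ 1 ≤ p + a - 1 ∧ p + a - 1 ≤ m := by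
    intro p hp1 hp2
    have h1' := lfmono (p + a - 1) b (by omega) (by omega) hbm
    have h2' := lfmono a (p + a - 1) ha1 (by omega) (by omega)
    exact ⟨h1'.1, h2'.2, by omega, by omega⟩
  have hpart : IsPartitionSinks l' r' m' lf' rf' tf' := by
    refine ⟨?_, ?_, ?_, ?_, ?_⟩
    · show max l' (lf (1 + a - 1)) = l'
      have : 1 + a - 1 = a := by omega
      rw [this]; omega
    · show min r' (rf (m' + a - 1)) = r'
      have : m' + a - 1 = b := by omega
      rw [this]; omega
    · intro p hp1 hpm'
      have hk := key p hp1 (by omega)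
      have h3 := hP3 (p + a - 1) (by omega) (by omega)
      have e1 : p + a - 1 + 1 = p + 1 + a - 1 := by omega
      rw [e1] at h3
      have h5 : lf (p + 1 + a - 1) ≤ lf b :=
        (lfmono (p + 1 + a - 1) b (by omega) (by omega) hbm).1
      show max l' (lf (p + 1 + a - 1)) = min r' (rf (p + a - 1)) + 1
      omega
    · intro p hp1 hpm'
      have hk := key p hp1 hpm'
      have h4 := hP4 (p + a - 1) (by omega) (by omega)
      show max l' (lf (p + a - 1)) ≤ min r' (rf (p + a - 1))
      omega
    · intro p hp1 hpm'
      have hk := key p hp1 hpm'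
      have h4 := hP4 (p + a - 1) (by omega) (by omega)
      constructor
      · exact le_max_left _ _
      · show max (lf' p) (min (tf (p + a - 1)) (rf' p)) ≤ rf' p
        have : lf' p ≤ rf' p := by
          show max l' (lf (p + a - 1)) ≤ min r' (rf (p + a - 1)); omega
        omega
  -- value of new partition
  set v' := maxOver (Finset.Icc 1 m') (fun p => theta1D x τ c w (lf' p) (tf' p) (rf' p))
    with hv'
  have hv'v : v' ≤ v := by
    rw [← hv]
    apply maxOver_le (maxOver_nonneg _ _)
    intro p hp
    simp only [Finset.mem_Icc] at hp
    have hk := key p hp.1 hp.2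
    have h4 := hP4 (p + a - 1) (by omega) (by omega)
    have h5 := hP5 (p + a - 1) (by omega) (by omega)
    have hrn' : rf (p + a - 1) ≤ n := by
      have := lfmono (p + a - 1) m (by omega) (by omega) le_rfl
      omega
    have hstep := theta1D_mono (x := x) (τ := τ) (c := c) (w := w) hx (le_of_lt hτ)
      (show lf (p + a - 1) ≤ max l' (lf (p + a - 1)) from le_max_right _ _)
      (show max l' (lf (p + a - 1)) ≤ min r' (rf (p + a - 1)) by omega)
      (show min r' (rf (p + a - 1)) ≤ rf (p + a - 1) from min_le_right _ _)
      hrn' h5.1 h5.2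
    refine le_trans hstep (le_maxOver (i := p + a - 1)
      (f := fun p => theta1D x τ c w (lf p) (tf p) (rf p)) ?_)
    exact Finset.mem_Icc.mpr ⟨by omega, by omega⟩
  refine le_trans (csInf_le hbdd ?_) hv'v
  exact ⟨m', lf', rf', tf', hm'1, hm'q, hpart, rfl⟩
end

section
/- In the discrete model, fix q ≥ 2 and 1 ≤ i ≤ n. Let j' be the largest j in {0,...,i−1} minimizing max( T(q−1, j−1), w_{j(i−1)} ), and let j'' be the largest j in {0,...,i} minimizing max( T(q−1, j−1), w_{ji} ). Then j'' ≥ j'. -/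
lemma maxOver_le_maxOver {S T : Finset ℕ} {f g : ℕ → ℝ} (hST : S ⊆ T)
    (hfg : ∀ i ∈ S, f i ≤ g i) : maxOver S f ≤ maxOver T g := by
  refine (Finset.fold_max_le _).2 ⟨maxOver_nonneg T g, fun i hi => ?_⟩
  exact le_trans (hfg i hi) ((Finset.le_fold_max _).2 (Or.inr ⟨i, hST hi, le_rfl⟩))

lemma w1_bddBelow (x : ℕ → ℝ) (τ : ℝ) (c : ℕ) (w : ℕ → ℕ) (j i : ℕ) :
    BddBelow {v : ℝ | ∃ t, j ≤ t ∧ t ≤ i ∧ theta1D x τ c w j t i = v} :=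
  ⟨0, fun v ⟨t, _, _, e⟩ => e ▸ theta1D_nonneg x τ c w j t i⟩

lemma w1_le_w1 (x : ℕ → ℝ) (τ : ℝ) (c : ℕ) (w : ℕ → ℕ) {j1 i1 j2 i2 : ℕ}
    (h2 : j2 ≤ i2)
    (H : ∀ t, j2 ≤ t → t ≤ i2 → ∃ t', j1 ≤ t' ∧ t' ≤ i1 ∧
      theta1D x τ c w j1 t' i1 ≤ theta1D x τ c w j2 t i2) :
    w1 x τ c w j1 i1 ≤ w1 x τ c w j2 i2 := by
  refine le_csInf ⟨_, j2, le_rfl, h2, rfl⟩ ?_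
  rintro b ⟨t, ht1, ht2, rfl⟩
  obtain ⟨t', h1, h2, h3⟩ := H t ht1 ht2
  exact le_trans (csInf_le (w1_bddBelow x τ c w j1 i1) ⟨t', h1, h2, rfl⟩) h3

lemma xmono_s11 {n : ℕ} {x : ℕ → ℝ} (hx : ∀ i, i < n → x i < x (i + 1)) :
    ∀ a b, a ≤ b → b ≤ n → x a ≤ x b := by
  intro a b hab hbn
  induction b with
  | zero => simp_all
  | succ k ih =>
    rcases Nat.lt_or_ge a (k+1) with h | h
    · exact le_trans (ih (by omega) (by omega)) (le_of_lt (hx k (by omega)))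
    · have : a = k + 1 := by omega
      simp [this]

/-- extending right endpoint increases w1 -/
lemma w1_mono_right {n : ℕ} {x : ℕ → ℝ} {τ : ℝ} {c : ℕ} {w : ℕ → ℕ}
    (hx : ∀ i, i < n → x i < x (i + 1)) (hτ : 0 < τ)
    {j i : ℕ} (hji : j ≤ i - 1) (hi1 : 1 ≤ i) (hi2 : i ≤ n) :
    w1 x τ c w j (i - 1) ≤ w1 x τ c w j i := by
  refine w1_le_w1 x τ c w (by omega) ?_
  intro t ht1 ht2
  rcases Nat.lt_or_ge t i with htl | hte
  · refine ⟨t, ht1, by omega, ?_⟩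
    unfold theta1D
    refine max_le_max le_rfl (maxOver_le_maxOver (Finset.Ioc_subset_Ioc_right (by omega)) ?_)
    intro k hk
    simp only [Finset.mem_Ioc] at hk
    have hsum : (∑ m ∈ Finset.Icc k (i-1), w m) ≤ ∑ m ∈ Finset.Icc k i, w m :=
      Finset.sum_le_sum_of_subset (Finset.Icc_subset_Icc_right (by omega))
    gcongr
  · have hti : t = i := by omega
    refine ⟨i - 1, by omega, le_rfl, ?_⟩
    unfold theta1D
    refine max_le ?_ ?_
    · refine le_trans ?_ (le_max_left _ _)
      refine maxOver_le_maxOver (Finset.Ico_subset_Ico_right (by omega)) ?_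
      intro k hk
      simp only [Finset.mem_Ico] at hk
      have hxx : x (i - 1) ≤ x t := by
        rw [hti]; exact xmono_s11 hx (i-1) i (by omega) hi2
      have : (x (i-1) - x k) * τ ≤ (x t - x k) * τ := by
        apply mul_le_mul_of_nonneg_right (by linarith) (le_of_lt hτ)
      linarith
    · have : Finset.Ioc (i - 1) (i - 1) = ∅ := by simp
      rw [this]
      simp only [maxOver, Finset.fold_empty]
      exact theta1D_nonneg x τ c w j t i


/-- shrinking from the left increases... rather decreases w1: w1 j1 i ≤ w1 j2 i for j2 ≤ j1 -/
lemma w1_anti_left {n : ℕ} {x : ℕ → ℝ} {τ : ℝ} {c : ℕ} {w : ℕ → ℕ}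
    (hx : ∀ i, i < n → x i < x (i + 1)) (hτ : 0 < τ)
    {j1 j2 i : ℕ} (h21 : j2 ≤ j1) (h1i : j1 ≤ i) (hi : i ≤ n) :
    w1 x τ c w j1 i ≤ w1 x τ c w j2 i := by
  refine w1_le_w1 x τ c w (by omega) ?_
  intro t ht1 ht2
  rcases le_or_gt j1 t with h | h
  · refine ⟨t, h, ht2, ?_⟩
    unfold theta1D
    refine max_le_max (maxOver_le_maxOver (Finset.Ico_subset_Ico_left h21) ?_) le_rfl
    intro k hk
    simp only [Finset.mem_Ico] at hk
    have hsum : (∑ m ∈ Finset.Icc j1 k, w m) ≤ ∑ m ∈ Finset.Icc j2 k, w m :=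
      Finset.sum_le_sum_of_subset (Finset.Icc_subset_Icc_left h21)
    gcongr
  · refine ⟨j1, le_rfl, h1i, ?_⟩
    unfold theta1D
    refine max_le ?_ ?_
    · have : Finset.Ico j1 j1 = ∅ := by simp
      rw [this]
      simp only [maxOver, Finset.fold_empty]
      exact theta1D_nonneg x τ c w j2 t i
    · refine le_trans ?_ (le_max_right _ _)
      refine maxOver_le_maxOver (Finset.Ioc_subset_Ioc_left (by omega)) ?_
      intro k hk
      simp only [Finset.mem_Ioc] at hk
      have hxt : x t ≤ x j1 := xmono_s11 hx t j1 (by omega) (by omega)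
      have : (x k - x j1) * τ ≤ (x k - x t) * τ := by
        apply mul_le_mul_of_nonneg_right (by linarith) (le_of_lt hτ)
      linarith

/-- the largest minimizing index `j` of
`max(T(q−1, j−1), w_{ji})` cannot decrease when `i` is incremented. -/
theorem stmt_11 (n : ℕ) (x : ℕ → ℝ) (τ : ℝ) (c : ℕ) (w : ℕ → ℕ)
    (hx : ∀ i, i < n → x i < x (i + 1)) (hτ : 0 < τ) (hc : 1 ≤ c)
    (hw : ∀ i, i ≤ n → 0 < w i)
    (q i j' j'' : ℕ) (hq : 2 ≤ q) (hi1 : 1 ≤ i) (hi2 : i ≤ n)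
    (hj'le : j' ≤ i - 1)
    (hj'min : ∀ j, j ≤ i - 1 →
      max (Tprev x τ c w (q - 1) j') (w1 x τ c w j' (i - 1)) ≤
      max (Tprev x τ c w (q - 1) j) (w1 x τ c w j (i - 1)))
    (hj'big : ∀ j, j ≤ i - 1 →
      max (Tprev x τ c w (q - 1) j) (w1 x τ c w j (i - 1)) =
        max (Tprev x τ c w (q - 1) j') (w1 x τ c w j' (i - 1)) → j ≤ j')
    (hj''le : j'' ≤ i)
    (hj''min : ∀ j, j ≤ i →
      max (Tprev x τ c w (q - 1) j'') (w1 x τ c w j'' i) ≤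
      max (Tprev x τ c w (q - 1) j) (w1 x τ c w j i))
    (hj''big : ∀ j, j ≤ i →
      max (Tprev x τ c w (q - 1) j) (w1 x τ c w j i) =
        max (Tprev x τ c w (q - 1) j'') (w1 x τ c w j'' i) → j ≤ j'') :
    j' ≤ j'' := by
  by_contra hcon
  push_neg at hcon
  have key1 : w1 x τ c w j'' (i - 1) ≤ w1 x τ c w j'' i :=
    w1_mono_right hx hτ (by omega) hi1 hi2
  have key2 : w1 x τ c w j' i ≤ w1 x τ c w j'' i :=
    w1_anti_left hx hτ (by omega) (by omega) hi2
  have hf := hj'min j'' (by omega)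
  have hT : Tprev x τ c w (q - 1) j' ≤
      max (Tprev x τ c w (q - 1) j'') (w1 x τ c w j'' i) :=
    le_trans (le_trans (le_max_left _ _) hf) (max_le_max le_rfl key1)
  have hW : w1 x τ c w j' i ≤
      max (Tprev x τ c w (q - 1) j'') (w1 x τ c w j'' i) :=
    le_trans key2 (le_max_right _ _)
  have hle : max (Tprev x τ c w (q - 1) j') (w1 x τ c w j' i) ≤
      max (Tprev x τ c w (q - 1) j'') (w1 x τ c w j'' i) := max_le hT hW
  have hge := hj''min j' (by omega)
  have := hj''big j' (by omega) (le_antisymm hle hge)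
  omega
end

section
/- Fix a scenario s and indices l, t, r with 0 ≤ l < t < r ≤ n. For l ≤ i < t' define the left evacuation function f_{t'}(i) = (x_{t'} − x_i)·τ + Σ_{l ≤ j ≤ i} w_j(s). If m with l ≤ m < t maximizes f_t over {l,...,t−1}, then the maximum of f_{t+1} over {l,...,t} is attained at i = m or at i = t; that is, max over l ≤ i ≤ t of f_{t+1}(i) = max( f_{t+1}(m), f_{t+1}(t) ). -/
/-- Left evacuation time to sink `x t` of the subpath starting at `x l`, under weights `w`. -/
noncomputable def thetaL (x : ℕ → ℝ) (τ : ℝ) (w : ℕ → ℝ) (l t : ℕ) : ℝ :=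
  maxOver (Finset.Ico l t) (fun i => (x t - x i) * τ + ∑ j ∈ Finset.Icc l i, w j)

/-- Right evacuation time to sink `x t` of the subpath ending at `x r`, under weights `w`. -/
noncomputable def thetaR (x : ℕ → ℝ) (τ : ℝ) (w : ℕ → ℝ) (t r : ℕ) : ℝ :=
  maxOver (Finset.Ioc t r) (fun i => (x i - x t) * τ + ∑ j ∈ Finset.Icc i r, w j)

/-- 1-sink evacuation time `Θ¹([x_l,x_r], x_t, w)`. -/
noncomputable def theta1 (x : ℕ → ℝ) (τ : ℝ) (w : ℕ → ℝ) (l t r : ℕ) : ℝ :=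
  max (thetaL x τ w l t) (thetaR x τ w t r)

/-- A scenario assigns each vertex a weight within its bounds. -/
def IsScenario (n : ℕ) (wlo whi : ℕ → ℝ) (s : ℕ → ℝ) : Prop :=
  ∀ i, i ≤ n → wlo i ≤ s i ∧ s i ≤ whi i

/-- A `k`-partition-with-sinks of the vertex set `{0,…,n}` into `k` consecutive
nonempty blocks `{l p, …, r p}` (`p ∈ {1,…,k}`) with a sink `t p` in each block. -/
structure KPartSinks (n k : ℕ) where
  l : ℕ → ℕ
  r : ℕ → ℕ
  t : ℕ → ℕ
  first : l 1 = 0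
  last : r k = n
  consec : ∀ p, 1 ≤ p → p < k → l (p + 1) = r p + 1
  block_nonempty : ∀ p, 1 ≤ p → p ≤ k → l p ≤ r p
  sink_lb : ∀ p, 1 ≤ p → p ≤ k → l p ≤ t p
  sink_ub : ∀ p, 1 ≤ p → p ≤ k → t p ≤ r p

/-- `k`-sink evacuation time `Θᵏ(P, {P̂,Ŷ}, w)`. -/
noncomputable def thetaK {n k : ℕ} (x : ℕ → ℝ) (τ : ℝ) (PY : KPartSinks n k) (w : ℕ → ℝ) : ℝ :=
  maxOver (Finset.Icc 1 k) (fun p => theta1 x τ w (PY.l p) (PY.t p) (PY.r p))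

/-- Optimal `k`-sink evacuation time `Θᵏ_opt(P, w)`. -/
noncomputable def thetaOpt (x : ℕ → ℝ) (τ : ℝ) (n k : ℕ) (w : ℕ → ℝ) : ℝ :=
  sInf {v : ℝ | ∃ PY : KPartSinks n k, thetaK x τ PY w = v}

/-- Regret `R({P̂,Ŷ}, w)`. -/
noncomputable def regret {n k : ℕ} (x : ℕ → ℝ) (τ : ℝ) (PY : KPartSinks n k) (w : ℕ → ℝ) : ℝ :=
  thetaK x τ PY w - thetaOpt x τ n k w

/-- Max-regret `R_max({P̂,Ŷ})`. -/
noncomputable def maxRegret {n k : ℕ} (x : ℕ → ℝ) (τ : ℝ) (wlo whi : ℕ → ℝ)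
    (PY : KPartSinks n k) : ℝ :=
  sSup {v : ℝ | ∃ s : ℕ → ℝ, IsScenario n wlo whi s ∧ regret x τ PY s = v}

/-- A worst-case scenario: a scenario attaining the max-regret. -/
def IsWorstCase {n k : ℕ} (x : ℕ → ℝ) (τ : ℝ) (wlo whi : ℕ → ℝ) (PY : KPartSinks n k)
    (s : ℕ → ℝ) : Prop :=
  IsScenario n wlo whi s ∧ regret x τ PY s = maxRegret x τ wlo whi PY

/-- `d` is the index of the dominant part of `{P̂,Ŷ}` under weights `w`:
the smallest index attaining `max_p Θ¹(P_p, y_p, w)`. -/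
def IsDominant {n k : ℕ} (x : ℕ → ℝ) (τ : ℝ) (PY : KPartSinks n k) (w : ℕ → ℝ) (d : ℕ) : Prop :=
  1 ≤ d ∧ d ≤ k ∧
  (∀ p, 1 ≤ p → p ≤ k →
    theta1 x τ w (PY.l p) (PY.t p) (PY.r p) ≤ theta1 x τ w (PY.l d) (PY.t d) (PY.r d)) ∧
  (∀ p, 1 ≤ p → p < d →
    theta1 x τ w (PY.l p) (PY.t p) (PY.r p) < theta1 x τ w (PY.l d) (PY.t d) (PY.r d))

/-- `R_{lr}(x_t)`: the max-regret of the subpath `[x_l,x_r]` as assumed dominant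
part with sink `x_t`. -/
noncomputable def Rsink (x : ℕ → ℝ) (τ : ℝ) (wlo whi : ℕ → ℝ) (n k : ℕ) (l r t : ℕ) : ℝ :=
  sSup {v : ℝ | ∃ s : ℕ → ℝ, IsScenario n wlo whi s ∧
    theta1 x τ s l t r - thetaOpt x τ n k s = v}

/-- `R_{lr}`: the minimax regret of the subpath `[x_l,x_r]` as assumed dominant part. -/
noncomputable def Rlr (x : ℕ → ℝ) (τ : ℝ) (wlo whi : ℕ → ℝ) (n k : ℕ) (l r : ℕ) : ℝ :=
  sInf {v : ℝ | ∃ t, l ≤ t ∧ t ≤ r ∧ Rsink x τ wlo whi n k l r t = v}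

/-- A partition of `{0,…,i}` into `q` consecutive nonempty blocks `{l p, …, r p}`. -/
def IsQPartition (q i : ℕ) (l r : ℕ → ℕ) : Prop :=
  l 1 = 0 ∧ r q = i ∧ (∀ p, 1 ≤ p → p < q → l (p + 1) = r p + 1) ∧
  (∀ p, 1 ≤ p → p ≤ q → l p ≤ r p)

/-- `M(q, i)`: the minimum over partitions of `{0,…,i}` into `q` consecutive
nonempty blocks of `max_p R_{l_p r_p}`. -/
noncomputable def Mreg (x : ℕ → ℝ) (τ : ℝ) (wlo whi : ℕ → ℝ) (n k : ℕ) (q i : ℕ) : ℝ :=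
  sInf {v : ℝ | ∃ lf rf : ℕ → ℕ, IsQPartition q i lf rf ∧
    maxOver (Finset.Icc 1 q) (fun p => Rlr x τ wlo whi n k (lf p) (rf p)) = v}

/-- Left-dominant scenario on `{l,…,r}`. -/
def LeftDominant (wlo whi s : ℕ → ℝ) (l r : ℕ) : Prop :=
  ∃ i, l ≤ i ∧ i ≤ r + 1 ∧ (∀ j, l ≤ j → j < i → s j = whi j) ∧
    (∀ j, i ≤ j → j ≤ r → s j = wlo j)

/-- Right-dominant scenario on `{l,…,r}`. -/
def RightDominant (wlo whi s : ℕ → ℝ) (l r : ℕ) : Prop :=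
  ∃ i, l ≤ i ∧ i ≤ r + 1 ∧ (∀ j, l ≤ j → j < i → s j = wlo j) ∧
    (∀ j, i ≤ j → j ≤ r → s j = whi j)

/-- if the left evacuation function for sink `x_t` is maximized
at `m`, then after moving the sink to `x_{t+1}` the maximum is attained at `m`
or at `t`. -/
theorem stmt_15 (n : ℕ) (x : ℕ → ℝ) (τ : ℝ) (wlo whi : ℕ → ℝ)
    (hx : ∀ i, i < n → x i < x (i + 1)) (hτ : 0 < τ)
    (hw : ∀ i, i ≤ n → 0 < wlo i ∧ wlo i ≤ whi i)
    (s : ℕ → ℝ) (hs : IsScenario n wlo whi s)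
    (l t r : ℕ) (hlt : l < t) (htr : t < r) (hrn : r ≤ n)
    (m : ℕ) (hm1 : l ≤ m) (hm2 : m < t)
    (hmax : ∀ i, l ≤ i → i < t →
      (x t - x i) * τ + ∑ j ∈ Finset.Icc l i, s j ≤
      (x t - x m) * τ + ∑ j ∈ Finset.Icc l m, s j) :
    maxOver (Finset.Ico l (t + 1))
        (fun i => (x (t + 1) - x i) * τ + ∑ j ∈ Finset.Icc l i, s j) =
      max ((x (t + 1) - x m) * τ + ∑ j ∈ Finset.Icc l m, s j)
          ((x (t + 1) - x t) * τ + ∑ j ∈ Finset.Icc l t, s j) := by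
  have hxt : x t < x (t + 1) := hx t (lt_of_lt_of_le htr hrn)
  have hsum : 0 ≤ ∑ j ∈ Finset.Icc l t, s j := by
    apply Finset.sum_nonneg
    intro j hj
    simp only [Finset.mem_Icc] at hj
    have hjn : j ≤ n := le_trans hj.2 (le_trans (le_of_lt htr) hrn)
    have := (hw j hjn).1
    have := (hs j hjn).1
    linarith
  have hft : 0 ≤ (x (t + 1) - x t) * τ + ∑ j ∈ Finset.Icc l t, s j := by
    have : 0 ≤ (x (t + 1) - x t) * τ := mul_nonneg (by linarith) hτ.le
    linarith
  apply le_antisymm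
  · rw [maxOver, Finset.fold_max_le]
    refine ⟨le_max_of_le_right hft, ?_⟩
    intro i hi
    simp only [Finset.mem_Ico] at hi
    rcases lt_or_eq_of_le (Nat.lt_succ_iff.mp hi.2) with h | h
    · refine le_max_of_le_left ?_
      have := hmax i hi.1 h
      nlinarith
    · subst h; exact le_max_right _ _
  · apply max_le
    · rw [maxOver, Finset.le_fold_max]
      exact Or.inr ⟨m, Finset.mem_Ico.mpr ⟨hm1, by omega⟩, le_refl _⟩
    · rw [maxOver, Finset.le_fold_max]
      exact Or.inr ⟨t, Finset.mem_Ico.mpr ⟨le_of_lt hlt, by omega⟩, le_refl _⟩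
end
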